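/- For every measurable function E : Z^{n+1} → [0,∞], the function E^X := E/E^i (with the convention 0/0 := 1) is an exchangeability e-variable. -/

import Mathlib

open MeasureTheory ProbabilityTheory
open scoped ENNReal NNReal

noncomputable section

/-- `E` is a *randomness e-variable*: a measurable nonnegative function on `Z^{n+1}` whose
integral is at most 1 under every product (IID) probability measure `Q^{n+1}`. -/
def IsRandE {Z : Type*} [MeasurableSpace Z] (n : ℕ) (E : (Fin (n+1) → Z) → ℝ≥0∞) : Prop :=
  Measurable E ∧
    ∀ (Q : Measure Z), IsProbabilityMeasure Q →
      ∫⁻ z, E z ∂(Measure.pi fun _ : Fin (n+1) => Q) ≤ 1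

/-- A probability measure on `Z^{n+1}` is *exchangeable* if it is invariant under all
permutations of the `n+1` coordinates. -/
def IsExchangeable {Z : Type*} [MeasurableSpace Z] (n : ℕ)
    (R : Measure (Fin (n+1) → Z)) : Prop :=
  ∀ π : Equiv.Perm (Fin (n+1)), Measure.map (fun z i => z (π i)) R = R

/-- `E` is an *exchangeability e-variable*: its integral is at most 1 under every
exchangeable probability measure on `Z^{n+1}`. -/
def IsExchE {Z : Type*} [MeasurableSpace Z] (n : ℕ) (E : (Fin (n+1) → Z) → ℝ≥0∞) : Prop :=
  Measurable E ∧
    ∀ (R : Measure (Fin (n+1) → Z)), IsProbabilityMeasure R → IsExchangeable n R →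
      ∫⁻ z, E z ∂ R ≤ 1

/-- A function on `Z^{n+1}` is *train-invariant* if it is invariant under permutations of the
first `n` (training) examples. -/
def TrainInv {Z α : Type*} (n : ℕ) (E : (Fin (n+1) → Z) → α) : Prop :=
  ∀ (z : Fin (n+1) → Z) (σ : Equiv.Perm (Fin n)),
    E (Fin.snoc (fun i => z (Fin.castSucc (σ i))) (z (Fin.last n))) = E z

/-- `E^i`: the average of `E` over all permutations of the `n+1` examples. -/
def Ei {Z : Type*} (n : ℕ) (E : (Fin (n+1) → Z) → ℝ≥0∞) : (Fin (n+1) → Z) → ℝ≥0∞ :=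
  fun z => (∑ π : Equiv.Perm (Fin (n+1)), E (fun i => z (π i))) / (Nat.factorial (n+1) : ℝ≥0∞)

/-- `E^X := E / E^i`, with the convention `0/0 := 1`. -/
def EX {Z : Type*} (n : ℕ) (E : (Fin (n+1) → Z) → ℝ≥0∞) : (Fin (n+1) → Z) → ℝ≥0∞ :=
  fun z => if E z = 0 ∧ Ei n E z = 0 then 1 else E z / Ei n E z

/-- `E^t`: the average of `E` over all permutations of the `n` training examples. -/
def Et {Z : Type*} (n : ℕ) (E : (Fin (n+1) → Z) → ℝ≥0∞) : (Fin (n+1) → Z) → ℝ≥0∞ :=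
  fun z => (∑ σ : Equiv.Perm (Fin n),
      E (Fin.snoc (fun i => z (Fin.castSucc (σ i))) (z (Fin.last n)))) / (Nat.factorial n : ℝ≥0∞)

/-- Replace the label of the test (last) example by `y`, keeping the training examples and the
test object: this is `(z_1, …, z_n, (x_{n+1}, y))`. -/
def withLabel {X Y : Type*} (n : ℕ) (z : Fin (n+1) → X × Y) (y : Y) : Fin (n+1) → X × Y :=
  Fin.snoc (fun i : Fin n => z (Fin.castSucc i)) ((z (Fin.last n)).1, y)

/-!
`E^i` is invariant under permutations of the examples, so the average `(E^X)^i` of `E^X` over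
the orbit of a point is `(∑ E/E^i)/(n+1)! = E^i/E^i ≤ 1` (and exactly `1` when `E` vanishes on the
orbit, by the convention `0/0 = 1`). Exchangeability of `R` says that every `f` has the same
integral as its orbit average `f^i`, hence `∫ E^X dR = ∫ (E^X)^i dR ≤ 1`.
-/

lemma measurable_precomp {ι κ Z : Type*} [MeasurableSpace Z] (σ : κ → ι) :
    Measurable fun (z : ι → Z) i => z (σ i) :=
  measurable_pi_lambda _ fun i => measurable_pi_apply (σ i)

lemma Ei_comp_perm {Z : Type*} (n : ℕ) (E : (Fin (n+1) → Z) → ℝ≥0∞) (z : Fin (n+1) → Z)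
    (π : Equiv.Perm (Fin (n+1))) : Ei n E (fun i => z (π i)) = Ei n E z := by
  unfold Ei
  congr 1
  exact Fintype.sum_equiv (Equiv.mulLeft π) _ _ fun _ => rfl

lemma measurable_Ei {Z : Type*} [MeasurableSpace Z] (n : ℕ) {E : (Fin (n+1) → Z) → ℝ≥0∞}
    (hE : Measurable E) : Measurable (Ei n E) :=
  (Finset.measurable_sum _ fun (π : Equiv.Perm (Fin (n+1))) _ =>
    hE.comp (measurable_precomp π)).div_const _

lemma measurable_EX {Z : Type*} [MeasurableSpace Z] (n : ℕ) {E : (Fin (n+1) → Z) → ℝ≥0∞}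
    (hE : Measurable E) : Measurable (EX n E) :=
  Measurable.ite ((hE (measurableSet_singleton 0)).inter
      (measurable_Ei n hE (measurableSet_singleton 0)))
    measurable_const (hE.div (measurable_Ei n hE))

lemma lintegral_Ei_of_isExchangeable {Z : Type*} [MeasurableSpace Z] (n : ℕ)
    {R : Measure (Fin (n+1) → Z)} (hR : IsExchangeable n R)
    {f : (Fin (n+1) → Z) → ℝ≥0∞} (hf : Measurable f) :
    ∫⁻ z, Ei n f z ∂ R = ∫⁻ z, f z ∂ R := by
  have hc0 : ((n+1).factorial : ℝ≥0∞) ≠ 0 := Nat.cast_ne_zero.mpr (n+1).factorial_ne_zero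
  have hcomp (π : Equiv.Perm (Fin (n+1))) : ∫⁻ z, f (fun i => z (π i)) ∂ R = ∫⁻ z, f z ∂ R := by
    rw [← lintegral_map hf (measurable_precomp π), hR π]
  have hfπ (π : Equiv.Perm (Fin (n+1))) : Measurable fun z : Fin (n+1) → Z => f fun i => z (π i) :=
    hf.comp (measurable_precomp π)
  simp only [Ei, div_eq_mul_inv]
  rw [lintegral_mul_const _ (Finset.measurable_sum _ fun π _ => hfπ π),
    lintegral_finsetSum _ fun π _ => hfπ π]
  simp only [hcomp, Finset.sum_const, Finset.card_univ, Fintype.card_perm, Fintype.card_fin,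
    nsmul_eq_mul]
  rw [mul_comm, ← mul_assoc, ENNReal.inv_mul_cancel hc0 (ENNReal.natCast_ne_top _), one_mul]

lemma Ei_EX_le_one {Z : Type*} (n : ℕ) (E : (Fin (n+1) → Z) → ℝ≥0∞) (z : Fin (n+1) → Z) :
    Ei n (EX n E) z ≤ 1 := by
  set c : ℝ≥0∞ := ((n+1).factorial : ℝ≥0∞)
  have hc0 : c ≠ 0 := Nat.cast_ne_zero.mpr (n+1).factorial_ne_zero
  have hct : c ≠ ∞ := ENNReal.natCast_ne_top _
  set S := ∑ π : Equiv.Perm (Fin (n+1)), E (fun i => z (π i))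
  have hEi : Ei n E z = S / c := rfl
  refine ENNReal.div_le_of_le_mul ?_
  rw [one_mul]
  by_cases h0 : Ei n E z = 0
  · have hS : S = 0 := by simpa [hEi, hct] using h0
    have hEX (π : Equiv.Perm (Fin (n+1))) : EX n E (fun i => z (π i)) = 1 :=
      if_pos ⟨Finset.sum_eq_zero_iff.mp hS π (Finset.mem_univ π), (Ei_comp_perm n E z π).trans h0⟩
    simp [hEX, Fintype.card_perm]
  · have hEX (π : Equiv.Perm (Fin (n+1))) :
        EX n E (fun i => z (π i)) = E (fun i => z (π i)) * (Ei n E z)⁻¹ := by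
      rw [EX, Ei_comp_perm, if_neg (fun h => h0 h.2), div_eq_mul_inv]
    calc ∑ π : Equiv.Perm (Fin (n+1)), EX n E (fun i => z (π i)) = S / Ei n E z := by
          simp only [hEX, ← Finset.sum_mul, S, div_eq_mul_inv]
      _ ≤ c := ENNReal.div_le_of_le_mul (by rw [hEi, ENNReal.mul_div_cancel hc0 hct])

theorem stmt10_general {Z : Type*} [MeasurableSpace Z] (n : ℕ)
    (E : (Fin (n+1) → Z) → ℝ≥0∞) (hE : Measurable E) :
    IsExchE n (EX n E) := by
  refine ⟨measurable_EX n hE, fun R _ hR => ?_⟩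
  calc ∫⁻ z, EX n E z ∂ R = ∫⁻ z, Ei n (EX n E) z ∂ R :=
        (lintegral_Ei_of_isExchangeable n hR (measurable_EX n hE)).symm
    _ ≤ ∫⁻ _, 1 ∂ R := lintegral_mono (Ei_EX_le_one n E)
    _ = 1 := by simp

/-- For every measurable `E : Z^{n+1} → [0,∞]`, the function `E^X := E/E^i`
(with `0/0 := 1`) is an exchangeability e-variable. -/
theorem stmt10 {Z : Type*} [MeasurableSpace Z] (n : ℕ) (hn : 1 ≤ n)
    (E : (Fin (n+1) → Z) → ℝ≥0∞) (hE : Measurable E) :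
    IsExchE n (EX n E) :=
  stmt10_general n E hE

end
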